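/- arXiv:2408.00271 — 2 statements merged into one kernel-verified Lean document; each statement's English description precedes it below -/
import Mathlib

section
/- For a = (a₁, a₂) ∈ ℚ² ∖ ℤ², define f_a(τ) = (g₂(L_τ) g₃(L_τ)/Δ₀(L_τ)) · ℘_{L_τ}(a₁τ + a₂), where L_τ = τℤ ⊕ ℤ. Then for every γ ∈ SL₂(ℤ), f_a(γτ) = f_{aγ}(τ) for all τ ∈ ℍ, where aγ denotes the row vector-matrix product. -/
open Matrix MatrixGroups

/-- The upper half-plane, as a subset of `ℂ`. -/
def UHP : Set ℂ := {z : ℂ | 0 < z.im}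

/-- The Möbius action of `SL(2, ℤ)` on the upper half-plane. -/
noncomputable def msmul (γ : SL(2, ℤ)) (z : ℂ) : ℂ :=
  (((γ 0 0 : ℤ) : ℂ) * z + ((γ 0 1 : ℤ) : ℂ)) / (((γ 1 0 : ℤ) : ℂ) * z + ((γ 1 1 : ℤ) : ℂ))

/-- `g₂(L) = 60 Σ'_{ω ∈ L} ω⁻⁴` for `L = ω₁ℤ ⊕ ω₂ℤ`. -/
noncomputable def latG2 (ω₁ ω₂ : ℂ) : ℂ :=
  60 * ∑' p : {p : ℤ × ℤ // p ≠ 0}, (((p.1.1 : ℂ) * ω₁ + (p.1.2 : ℂ) * ω₂) ^ 4)⁻¹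

/-- `g₃(L) = 140 Σ'_{ω ∈ L} ω⁻⁶` for `L = ω₁ℤ ⊕ ω₂ℤ`. -/
noncomputable def latG3 (ω₁ ω₂ : ℂ) : ℂ :=
  140 * ∑' p : {p : ℤ × ℤ // p ≠ 0}, (((p.1.1 : ℂ) * ω₁ + (p.1.2 : ℂ) * ω₂) ^ 6)⁻¹

/-- The Weierstrass `℘`-function of the lattice `L = ω₁ℤ ⊕ ω₂ℤ`. -/
noncomputable def wp (ω₁ ω₂ z : ℂ) : ℂ :=
  (z ^ 2)⁻¹ + ∑' p : {p : ℤ × ℤ // p ≠ 0},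
    (((z - ((p.1.1 : ℂ) * ω₁ + (p.1.2 : ℂ) * ω₂)) ^ 2)⁻¹ -
      (((p.1.1 : ℂ) * ω₁ + (p.1.2 : ℂ) * ω₂) ^ 2)⁻¹)

/-- The Fricke function `f_a(τ) = (g₂ g₃ / Δ₀)(L_τ) · ℘_{L_τ}(a₁τ + a₂)`, for
`L_τ = τℤ ⊕ ℤ` and `a = (a₁, a₂) ∈ ℚ²`. -/
noncomputable def fricke (a : ℚ × ℚ) (τ : ℂ) : ℂ :=
  latG2 τ 1 * latG3 τ 1 / (latG2 τ 1 ^ 3 - 27 * latG3 τ 1 ^ 2) *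
    wp τ 1 ((a.1 : ℂ) * τ + (a.2 : ℂ))

/-- `a ∈ ℚ² ∖ ℤ²`. -/
def NotIntVec (a : ℚ × ℚ) : Prop := ¬ ∃ p : ℤ × ℤ, a = ((p.1 : ℚ), (p.2 : ℚ))

/-- The row vector–matrix product `aγ` for `a ∈ ℚ²` and `γ ∈ SL(2, ℤ)`. -/
def vecMulSL (a : ℚ × ℚ) (γ : SL(2, ℤ)) : ℚ × ℚ :=
  (a.1 * (γ 0 0 : ℤ) + a.2 * (γ 1 0 : ℤ), a.1 * (γ 0 1 : ℤ) + a.2 * (γ 1 1 : ℤ))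

/-! Write `L_τ` for the lattice with basis `(ω₁, ω₂) = (τ, 1)` and `γ = (a b; c d)`. Replacing
the basis by `(aω₁ + bω₂, cω₁ + dω₂)` does not change the lattice, and multiplying it by
`(cτ + d)⁻¹` gives the basis `(γτ, 1)`. The function `(ω₁, ω₂) ↦ (g₂ g₃ / Δ₀)(L) · ℘_L(a₁ω₁ + a₂ω₂)`
is homogeneous of degree `-10 + 12 - 2 = 0`, and the change of basis turns `a` into `aγ`. -/

lemma sl2_det_eq_one (γ : SL(2, ℤ)) : γ 0 0 * γ 1 1 - γ 0 1 * γ 1 0 = 1 := by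
  rw [← Matrix.det_fin_two]
  exact γ.det_coe

def sl2RowMul (γ : SL(2, ℤ)) : ℤ × ℤ ≃+ ℤ × ℤ where
  toFun p := (p.1 * γ 0 0 + p.2 * γ 1 0, p.1 * γ 0 1 + p.2 * γ 1 1)
  invFun q := (q.1 * γ 1 1 - q.2 * γ 1 0, q.2 * γ 0 0 - q.1 * γ 0 1)
  left_inv p := by
    ext
    · linear_combination p.1 * sl2_det_eq_one γ
    · linear_combination p.2 * sl2_det_eq_one γ
  right_inv q := by
    ext
    · linear_combination q.1 * sl2_det_eq_one γ
    · linear_combination q.2 * sl2_det_eq_one γ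
  map_add' p q := by
    ext <;> simp only [Prod.fst_add, Prod.snd_add] <;> ring

noncomputable def latticeSum (k : ℕ) (ω₁ ω₂ : ℂ) : ℂ :=
  ∑' p : {p : ℤ × ℤ // p ≠ 0}, (((p.1.1 : ℂ) * ω₁ + (p.1.2 : ℂ) * ω₂) ^ k)⁻¹

lemma tsum_lattice_basis_change (γ : SL(2, ℤ)) (f : ℂ → ℂ) (ω₁ ω₂ : ℂ) :
    ∑' p : {p : ℤ × ℤ // p ≠ 0}, f ((p.1.1 : ℂ) * (γ 0 0 * ω₁ + γ 0 1 * ω₂) +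
        (p.1.2 : ℂ) * (γ 1 0 * ω₁ + γ 1 1 * ω₂)) =
      ∑' p : {p : ℤ × ℤ // p ≠ 0}, f ((p.1.1 : ℂ) * ω₁ + (p.1.2 : ℂ) * ω₂) := by
  let e : {p : ℤ × ℤ // p ≠ 0} ≃ {p : ℤ × ℤ // p ≠ 0} :=
    (sl2RowMul γ).toEquiv.subtypeEquiv fun p => (map_ne_zero_iff _ (sl2RowMul γ).injective).symm
  refine (tsum_congr fun p => congrArg f ?_).trans
    (e.tsum_eq fun q => f ((q.1.1 : ℂ) * ω₁ + (q.1.2 : ℂ) * ω₂))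
  simp only [e, Equiv.subtypeEquiv_apply, AddEquiv.toEquiv_eq_coe, AddEquiv.coe_toEquiv, sl2RowMul,
    AddEquiv.coe_mk, Equiv.coe_fn_mk]
  push_cast
  ring

lemma latticeSum_smul (k : ℕ) (c ω₁ ω₂ : ℂ) :
    latticeSum k (c * ω₁) (c * ω₂) = c⁻¹ ^ k * latticeSum k ω₁ ω₂ := by
  rw [latticeSum, latticeSum, ← tsum_mul_left]
  refine tsum_congr fun p => ?_
  rw [show (p.1.1 : ℂ) * (c * ω₁) + p.1.2 * (c * ω₂) = c * (p.1.1 * ω₁ + p.1.2 * ω₂) by ring,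
    mul_pow, mul_inv, inv_pow]

lemma latticeSum_basis_change (k : ℕ) (γ : SL(2, ℤ)) (ω₁ ω₂ : ℂ) :
    latticeSum k (((γ 0 0 : ℤ) : ℂ) * ω₁ + ((γ 0 1 : ℤ) : ℂ) * ω₂)
      (((γ 1 0 : ℤ) : ℂ) * ω₁ + ((γ 1 1 : ℤ) : ℂ) * ω₂) = latticeSum k ω₁ ω₂ :=
  tsum_lattice_basis_change γ (fun w => (w ^ k)⁻¹) ω₁ ω₂

lemma latG2_eq (ω₁ ω₂ : ℂ) : latG2 ω₁ ω₂ = 60 * latticeSum 4 ω₁ ω₂ := rfl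

lemma latG3_eq (ω₁ ω₂ : ℂ) : latG3 ω₁ ω₂ = 140 * latticeSum 6 ω₁ ω₂ := rfl

lemma latG2_smul (c ω₁ ω₂ : ℂ) : latG2 (c * ω₁) (c * ω₂) = c⁻¹ ^ 4 * latG2 ω₁ ω₂ := by
  rw [latG2_eq, latG2_eq, latticeSum_smul, mul_left_comm]

lemma latG3_smul (c ω₁ ω₂ : ℂ) : latG3 (c * ω₁) (c * ω₂) = c⁻¹ ^ 6 * latG3 ω₁ ω₂ := by
  rw [latG3_eq, latG3_eq, latticeSum_smul, mul_left_comm]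

lemma latG2_basis_change (γ : SL(2, ℤ)) (ω₁ ω₂ : ℂ) :
    latG2 (((γ 0 0 : ℤ) : ℂ) * ω₁ + ((γ 0 1 : ℤ) : ℂ) * ω₂)
      (((γ 1 0 : ℤ) : ℂ) * ω₁ + ((γ 1 1 : ℤ) : ℂ) * ω₂) = latG2 ω₁ ω₂ := by
  rw [latG2_eq, latG2_eq, latticeSum_basis_change]

lemma latG3_basis_change (γ : SL(2, ℤ)) (ω₁ ω₂ : ℂ) :
    latG3 (((γ 0 0 : ℤ) : ℂ) * ω₁ + ((γ 0 1 : ℤ) : ℂ) * ω₂)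
      (((γ 1 0 : ℤ) : ℂ) * ω₁ + ((γ 1 1 : ℤ) : ℂ) * ω₂) = latG3 ω₁ ω₂ := by
  rw [latG3_eq, latG3_eq, latticeSum_basis_change]

lemma wp_smul (c ω₁ ω₂ z : ℂ) : wp (c * ω₁) (c * ω₂) (c * z) = c⁻¹ ^ 2 * wp ω₁ ω₂ z := by
  rw [wp, wp, mul_add, ← tsum_mul_left, mul_pow, mul_inv, inv_pow]
  congr 1
  refine tsum_congr fun p => ?_
  rw [show (p.1.1 : ℂ) * (c * ω₁) + p.1.2 * (c * ω₂) = c * (p.1.1 * ω₁ + p.1.2 * ω₂) by ring,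
    ← mul_sub, mul_pow, mul_pow, mul_inv, mul_inv, mul_sub]

lemma wp_basis_change (γ : SL(2, ℤ)) (ω₁ ω₂ z : ℂ) :
    wp (((γ 0 0 : ℤ) : ℂ) * ω₁ + ((γ 0 1 : ℤ) : ℂ) * ω₂)
      (((γ 1 0 : ℤ) : ℂ) * ω₁ + ((γ 1 1 : ℤ) : ℂ) * ω₂) z = wp ω₁ ω₂ z := by
  rw [wp, wp, tsum_lattice_basis_change γ (fun w => ((z - w) ^ 2)⁻¹ - (w ^ 2)⁻¹)]

noncomputable def frickeHom (a : ℚ × ℚ) (ω₁ ω₂ : ℂ) : ℂ :=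
  latG2 ω₁ ω₂ * latG3 ω₁ ω₂ / (latG2 ω₁ ω₂ ^ 3 - 27 * latG3 ω₁ ω₂ ^ 2) *
    wp ω₁ ω₂ ((a.1 : ℂ) * ω₁ + (a.2 : ℂ) * ω₂)

lemma fricke_eq_frickeHom (a : ℚ × ℚ) (τ : ℂ) : fricke a τ = frickeHom a τ 1 := by
  rw [fricke, frickeHom, mul_one]

lemma frickeHom_smul (a : ℚ × ℚ) {c : ℂ} (hc : c ≠ 0) (ω₁ ω₂ : ℂ) :
    frickeHom a (c * ω₁) (c * ω₂) = frickeHom a ω₁ ω₂ := by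
  rw [frickeHom, frickeHom, latG2_smul, latG3_smul,
    show (a.1 : ℂ) * (c * ω₁) + a.2 * (c * ω₂) = c * (a.1 * ω₁ + a.2 * ω₂) by ring, wp_smul]
  field_simp

lemma frickeHom_basis_change (a : ℚ × ℚ) (γ : SL(2, ℤ)) (ω₁ ω₂ : ℂ) :
    frickeHom a (((γ 0 0 : ℤ) : ℂ) * ω₁ + ((γ 0 1 : ℤ) : ℂ) * ω₂)
      (((γ 1 0 : ℤ) : ℂ) * ω₁ + ((γ 1 1 : ℤ) : ℂ) * ω₂) = frickeHom (vecMulSL a γ) ω₁ ω₂ := by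
  rw [frickeHom, frickeHom, latG2_basis_change, latG3_basis_change, wp_basis_change, vecMulSL]
  congr 2
  push_cast
  ring

lemma msmul_denom_ne_zero (γ : SL(2, ℤ)) {τ : ℂ} (hτ : τ ∈ UHP) :
    ((γ 1 0 : ℤ) : ℂ) * τ + ((γ 1 1 : ℤ) : ℂ) ≠ 0 := by
  intro h
  have him : ((γ 1 0 : ℤ) : ℝ) * τ.im = 0 := by simpa using congrArg Complex.im h
  have hc : γ 1 0 = 0 := by exact_mod_cast (mul_eq_zero.1 him).resolve_right (ne_of_gt hτ)
  have hd : γ 1 1 = 0 := by simpa [hc] using h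
  simpa [hc, hd] using sl2_det_eq_one γ

theorem fricke_slash_action_general (a : ℚ × ℚ) (γ : SL(2, ℤ))
    (τ : ℂ) (hτ : τ ∈ UHP) :
    fricke a (msmul γ τ) = fricke (vecMulSL a γ) τ := by
  set j := ((γ 1 0 : ℤ) : ℂ) * τ + ((γ 1 1 : ℤ) : ℂ)
  have hj : j ≠ 0 := msmul_denom_ne_zero γ hτ
  calc fricke a (msmul γ τ)
      = frickeHom a (j⁻¹ * (((γ 0 0 : ℤ) : ℂ) * τ + ((γ 0 1 : ℤ) : ℂ) * 1))
          (j⁻¹ * (((γ 1 0 : ℤ) : ℂ) * τ + ((γ 1 1 : ℤ) : ℂ) * 1)) := by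
        rw [fricke_eq_frickeHom, msmul, mul_one, mul_one, inv_mul_cancel₀ hj, inv_mul_eq_div]
    _ = frickeHom (vecMulSL a γ) τ 1 := by
        rw [frickeHom_smul a (inv_ne_zero hj), frickeHom_basis_change]
    _ = fricke (vecMulSL a γ) τ := (fricke_eq_frickeHom _ _).symm

/-- For `a ∈ ℚ² ∖ ℤ²` and every `γ ∈ SL(2, ℤ)`, the Fricke function satisfies
`f_a(γτ) = f_{aγ}(τ)` for all `τ ∈ ℍ`. -/
theorem fricke_slash_action (a : ℚ × ℚ) (ha : NotIntVec a) (γ : SL(2, ℤ))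
    (τ : ℂ) (hτ : τ ∈ UHP) :
    fricke a (msmul γ τ) = fricke (vecMulSL a γ) τ :=
  fricke_slash_action_general a γ τ hτ
end

section
/- If a ∈ N^{−1}ℤ² ∖ ℤ², then the Fricke function f_a is invariant under {±I}·Γ(N), i.e., f_a(γτ) = f_a(τ) for all γ ∈ {±I}Γ(N) and τ ∈ ℍ. -/
open Matrix MatrixGroups

/-!
Write `w = cτ + d`. The basis `(aτ + b, cτ + d)` of `L_τ` differs from `(τ, 1)` by `γ ∈ SL₂(ℤ)`,
so `L_{γτ} = w⁻¹ L_τ`: `g₂`, `g₃` and `℘_{L_{γτ}}(z / w)` pick up the factors `w⁴`, `w⁶`, `w²`,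
the prefactor `g₂g₃/Δ₀` the factor `w⁻²`, and `f_a(γτ) = f_{aγ}(τ)`. If `a ∈ N⁻¹ℤ²` and
`γ ≡ ±I (mod N)`, then `aγ ≡ ±a (mod ℤ²)`, and `f_b` depends only on `±b mod ℤ²` because `℘_{L_τ}`
is even and `L_τ`-periodic.
-/

open PeriodPair

section rowMul

variable {R : Type*} [CommRing R]

def rowMul (a : R × R) (γ : SL(2, ℤ)) : R × R :=
  (a.1 * (γ 0 0 : R) + a.2 * (γ 1 0 : R), a.1 * (γ 0 1 : R) + a.2 * (γ 1 1 : R))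

theorem rowMul_one (a : R × R) : rowMul a 1 = a := by
  simp [rowMul]

theorem rowMul_mul (a : R × R) (γ δ : SL(2, ℤ)) : rowMul (rowMul a γ) δ = rowMul a (γ * δ) := by
  ext <;>
    simp only [rowMul, Matrix.SpecialLinearGroup.coe_mul, mul_apply, Fin.sum_univ_two, Int.cast_add,
      Int.cast_mul] <;>
    ring

theorem rowMul_neg (a : R × R) (γ : SL(2, ℤ)) : rowMul a (-γ) = -rowMul a γ := by
  simp only [rowMul, Matrix.SpecialLinearGroup.coe_neg, neg_apply, Int.cast_neg, mul_neg, ← neg_add,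
    Prod.neg_mk]

variable (R) in
def rowMulLinearEquiv (γ : SL(2, ℤ)) : (R × R) ≃ₗ[R] (R × R) where
  toFun a := rowMul a γ
  invFun a := rowMul a γ⁻¹
  map_add' a b := by ext <;> simp only [rowMul, Prod.fst_add, Prod.snd_add] <;> ring
  map_smul' c a := by
    ext <;> simp only [rowMul, Prod.smul_fst, Prod.smul_snd, smul_eq_mul, RingHom.id_apply] <;> ring
  left_inv a := by simp only [rowMul_mul, mul_inv_cancel, rowMul_one]
  right_inv a := by simp only [rowMul_mul, inv_mul_cancel, rowMul_one]

end rowMul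

noncomputable def nonzeroLatticeSum (f : ℂ → ℂ) (ω₁ ω₂ : ℂ) : ℂ :=
  ∑' p : {p : ℤ × ℤ // p ≠ 0}, f ((p.1.1 : ℂ) * ω₁ + (p.1.2 : ℂ) * ω₂)

theorem latG2_eq_nonzeroLatticeSum (ω₁ ω₂ : ℂ) :
    latG2 ω₁ ω₂ = 60 * nonzeroLatticeSum (fun x => (x ^ 4)⁻¹) ω₁ ω₂ := rfl

theorem latG3_eq_nonzeroLatticeSum (ω₁ ω₂ : ℂ) :
    latG3 ω₁ ω₂ = 140 * nonzeroLatticeSum (fun x => (x ^ 6)⁻¹) ω₁ ω₂ := rfl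

theorem wp_eq_nonzeroLatticeSum (ω₁ ω₂ z : ℂ) :
    wp ω₁ ω₂ z = (z ^ 2)⁻¹ + nonzeroLatticeSum (fun x => ((z - x) ^ 2)⁻¹ - (x ^ 2)⁻¹) ω₁ ω₂ :=
  rfl

theorem nonzeroLatticeSum_const_mul (c : ℂ) (f : ℂ → ℂ) (ω₁ ω₂ : ℂ) :
    nonzeroLatticeSum (fun x => c * f x) ω₁ ω₂ = c * nonzeroLatticeSum f ω₁ ω₂ :=
  tsum_mul_left

theorem nonzeroLatticeSum_basis_change (f : ℂ → ℂ) (ω₁ ω₂ : ℂ) (γ : SL(2, ℤ)) :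
    nonzeroLatticeSum f (γ 0 0 * ω₁ + γ 0 1 * ω₂) (γ 1 0 * ω₁ + γ 1 1 * ω₂) =
      nonzeroLatticeSum f ω₁ ω₂ := by
  let e := rowMulLinearEquiv ℤ γ
  let e' : {p : ℤ × ℤ // p ≠ 0} ≃ {p : ℤ × ℤ // p ≠ 0} :=
    e.toEquiv.subtypeEquiv fun _ => e.map_ne_zero_iff.symm
  refine Eq.trans (tsum_congr fun p => congrArg f ?_)
    (e'.tsum_eq fun p => f ((p.1.1 : ℂ) * ω₁ + (p.1.2 : ℂ) * ω₂))
  change _ = ((rowMul p.1 γ).1 : ℂ) * ω₁ + ((rowMul p.1 γ).2 : ℂ) * ω₂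
  push_cast [rowMul]
  ring

def msmulDenom (γ : SL(2, ℤ)) (z : ℂ) : ℂ := ((γ 1 0 : ℤ) : ℂ) * z + ((γ 1 1 : ℤ) : ℂ)

theorem msmulDenom_ne_zero (γ : SL(2, ℤ)) {z : ℂ} (hz : z.im ≠ 0) : msmulDenom γ z ≠ 0 := by
  intro h
  have him : ((γ 1 0 : ℤ) : ℝ) * z.im = 0 := by simpa [msmulDenom] using congrArg Complex.im h
  have hc : γ 1 0 = 0 := by exact_mod_cast (mul_eq_zero.1 him).resolve_right hz
  have hd : γ 1 1 = 0 := by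
    exact_mod_cast (by simpa [msmulDenom, hc] using h : ((γ 1 1 : ℤ) : ℂ) = 0)
  have hdet := γ.det_coe
  rw [det_fin_two, hc, hd] at hdet
  simp at hdet

theorem mul_msmul_add (γ : SL(2, ℤ)) {τ : ℂ} (hw : msmulDenom γ τ ≠ 0) (x y : ℂ) :
    x * msmul γ τ + y =
      ((x * γ 0 0 + y * γ 1 0) * τ + (x * γ 0 1 + y * γ 1 1)) / msmulDenom γ τ := by
  rw [msmul, ← msmulDenom, eq_div_iff hw, add_mul, mul_assoc, div_mul_cancel₀ _ hw, msmulDenom]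
  ring

theorem nonzeroLatticeSum_msmul (f : ℂ → ℂ) (γ : SL(2, ℤ)) {τ : ℂ} (hw : msmulDenom γ τ ≠ 0) :
    nonzeroLatticeSum f (msmul γ τ) 1 =
      nonzeroLatticeSum (fun x => f (x / msmulDenom γ τ)) τ 1 := by
  rw [← nonzeroLatticeSum_basis_change _ τ 1 γ]
  refine tsum_congr fun p => congrArg f ?_
  rw [mul_one, mul_msmul_add γ hw]
  ring

theorem nonzeroLatticeSum_inv_pow_msmul (n : ℕ) (γ : SL(2, ℤ)) {τ : ℂ}
    (hw : msmulDenom γ τ ≠ 0) :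
    nonzeroLatticeSum (fun x => (x ^ n)⁻¹) (msmul γ τ) 1 =
      msmulDenom γ τ ^ n * nonzeroLatticeSum (fun x => (x ^ n)⁻¹) τ 1 := by
  rw [nonzeroLatticeSum_msmul _ γ hw, ← nonzeroLatticeSum_const_mul]
  congr! 2 with x
  rw [div_pow, inv_div, div_eq_mul_inv]

theorem latG2_msmul (γ : SL(2, ℤ)) {τ : ℂ} (hw : msmulDenom γ τ ≠ 0) :
    latG2 (msmul γ τ) 1 = msmulDenom γ τ ^ 4 * latG2 τ 1 := by
  rw [latG2_eq_nonzeroLatticeSum, latG2_eq_nonzeroLatticeSum,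
    nonzeroLatticeSum_inv_pow_msmul 4 γ hw, mul_left_comm]

theorem latG3_msmul (γ : SL(2, ℤ)) {τ : ℂ} (hw : msmulDenom γ τ ≠ 0) :
    latG3 (msmul γ τ) 1 = msmulDenom γ τ ^ 6 * latG3 τ 1 := by
  rw [latG3_eq_nonzeroLatticeSum, latG3_eq_nonzeroLatticeSum,
    nonzeroLatticeSum_inv_pow_msmul 6 γ hw, mul_left_comm]

theorem wp_msmul (γ : SL(2, ℤ)) {τ : ℂ} (hw : msmulDenom γ τ ≠ 0) (z : ℂ) :
    wp (msmul γ τ) 1 (z / msmulDenom γ τ) = msmulDenom γ τ ^ 2 * wp τ 1 z := by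
  rw [wp_eq_nonzeroLatticeSum, wp_eq_nonzeroLatticeSum, nonzeroLatticeSum_msmul _ γ hw, mul_add,
    ← nonzeroLatticeSum_const_mul]
  congr 1
  · rw [div_pow, inv_div, div_eq_mul_inv]
  · congr 1
    funext x
    rw [div_sub_div_same, div_pow, div_pow, inv_div, inv_div, mul_sub, div_eq_mul_inv,
      div_eq_mul_inv]

theorem nonzeroLatticeSum_eq_tsum_lattice (L : PeriodPair) (f : ℂ → ℂ) :
    nonzeroLatticeSum f L.ω₁ L.ω₂ = ∑' l : L.lattice, if l = 0 then 0 else f l := by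
  refine (tsum_subtype {p : ℤ × ℤ | p ≠ 0} fun p => f (p.1 * L.ω₁ + p.2 * L.ω₂)).trans ?_
  rw [← L.latticeEquivProd.symm.toEquiv.tsum_eq]
  refine tsum_congr fun p => ?_
  by_cases hp : p = 0 <;> simp [hp, Set.indicator, L.latticeEquiv_symm_apply]

-- `℘[L]` sums over all of `L`: its `l = 0` term is `1 / z ^ 2 - 1 / 0 ^ 2 = 1 / z ^ 2`.
theorem wp_eq_weierstrassP (L : PeriodPair) (z : ℂ) : wp L.ω₁ L.ω₂ z = ℘[L] z := by
  rw [← L.weierstrassPExcept_add 0, wp_eq_nonzeroLatticeSum, nonzeroLatticeSum_eq_tsum_lattice,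
    weierstrassPExcept]
  simp [add_comm, one_div]

def periodPairOfIm {τ : ℂ} (hτ : τ.im ≠ 0) : PeriodPair where
  ω₁ := τ
  ω₂ := 1
  indep := by
    refine LinearIndependent.pair_iff.2 fun s t h => ?_
    have hs : s = 0 := by
      simpa [hτ] using congrArg Complex.im h
    subst hs
    simpa using h

theorem wp_add_lattice {τ : ℂ} (hτ : τ.im ≠ 0) (z : ℂ) (m n : ℤ) :
    wp τ 1 (z + (m * τ + n)) = wp τ 1 z := by
  have hl : (m * τ + n : ℂ) ∈ (periodPairOfIm hτ).lattice :=
    mem_lattice.2 ⟨m, n, by simp [periodPairOfIm]⟩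
  exact (wp_eq_weierstrassP (periodPairOfIm hτ) _).trans
    (((periodPairOfIm hτ).weierstrassP_add_coe z ⟨_, hl⟩).trans
      (wp_eq_weierstrassP (periodPairOfIm hτ) z).symm)

theorem wp_neg {τ : ℂ} (hτ : τ.im ≠ 0) (z : ℂ) : wp τ 1 (-z) = wp τ 1 z :=
  (wp_eq_weierstrassP (periodPairOfIm hτ) _).trans
    (((periodPairOfIm hτ).weierstrassP_neg z).trans
      (wp_eq_weierstrassP (periodPairOfIm hτ) z).symm)

theorem fricke_msmul (a : ℚ × ℚ) (γ : SL(2, ℤ)) {τ : ℂ} (hτ : τ.im ≠ 0) :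
    fricke a (msmul γ τ) = fricke (rowMul a γ) τ := by
  have hw := msmulDenom_ne_zero γ hτ
  have harg : (a.1 : ℂ) * msmul γ τ + a.2 =
      (((rowMul a γ).1 : ℂ) * τ + (rowMul a γ).2) / msmulDenom γ τ := by
    rw [mul_msmul_add γ hw]
    push_cast [rowMul]
    rfl
  rw [fricke, fricke, harg, latG2_msmul γ hw, latG3_msmul γ hw, wp_msmul γ hw]
  set w := msmulDenom γ τ
  calc _ = w ^ 12 * (latG2 τ 1 * latG3 τ 1) / (w ^ 12 * (latG2 τ 1 ^ 3 - 27 * latG3 τ 1 ^ 2)) *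
        wp τ 1 (((rowMul a γ).1 : ℂ) * τ + (rowMul a γ).2) := by ring
    _ = _ := by rw [mul_div_mul_left _ _ (pow_ne_zero 12 hw)]

theorem fricke_add_intVec (a : ℚ × ℚ) (k : ℤ × ℤ) {τ : ℂ} (hτ : τ.im ≠ 0) :
    fricke (a + ((k.1 : ℚ), (k.2 : ℚ))) τ = fricke a τ := by
  rw [fricke, fricke, ← wp_add_lattice hτ ((a.1 : ℂ) * τ + a.2) k.1 k.2]
  congr 2
  simp only [Prod.fst_add, Prod.snd_add]
  push_cast
  ring

theorem fricke_neg (a : ℚ × ℚ) {τ : ℂ} (hτ : τ.im ≠ 0) : fricke (-a) τ = fricke a τ := by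
  rw [fricke, fricke, ← wp_neg hτ]
  congr 2
  simp only [Prod.fst_neg, Prod.snd_neg]
  push_cast
  ring

theorem exists_rowMul_eq_add_of_mem_Gamma {N : ℕ} (hN : N ≠ 0) (p : ℤ × ℤ) {γ : SL(2, ℤ)}
    (hγ : γ ∈ CongruenceSubgroup.Gamma N) :
    ∃ k : ℤ × ℤ, rowMul ((p.1 : ℚ) / N, (p.2 : ℚ) / N) γ =
      ((p.1 : ℚ) / N, (p.2 : ℚ) / N) + ((k.1 : ℚ), (k.2 : ℚ)) := by
  obtain ⟨h00, h01, h10, h11⟩ := CongruenceSubgroup.Gamma_mem.1 hγ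
  obtain ⟨s, hs⟩ := (ZMod.intCast_eq_intCast_iff_dvd_sub 1 (γ 0 0) N).1 (by simpa using h00.symm)
  obtain ⟨t, ht⟩ := (ZMod.intCast_zmod_eq_zero_iff_dvd _ N).1 h01
  obtain ⟨u, hu⟩ := (ZMod.intCast_zmod_eq_zero_iff_dvd _ N).1 h10
  obtain ⟨v, hv⟩ := (ZMod.intCast_eq_intCast_iff_dvd_sub 1 (γ 1 1) N).1 (by simpa using h11.symm)
  refine ⟨(p.1 * s + p.2 * u, p.1 * t + p.2 * v), ?_⟩
  have hN' : (N : ℚ) ≠ 0 := Nat.cast_ne_zero.2 hN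
  simp only [rowMul, eq_add_of_sub_eq' hs, ht, hu, eq_add_of_sub_eq' hv, Prod.mk_add_mk]
  push_cast
  congr 1 <;> field_simp <;> ring

theorem exists_rowMul_eq_add_or_eq_neg_add {N : ℕ} (hN : N ≠ 0) (p : ℤ × ℤ) {γ : SL(2, ℤ)}
    (hγ : γ ∈ CongruenceSubgroup.Gamma N ∨ -γ ∈ CongruenceSubgroup.Gamma N) :
    ∃ k : ℤ × ℤ, rowMul ((p.1 : ℚ) / N, (p.2 : ℚ) / N) γ =
      ((p.1 : ℚ) / N, (p.2 : ℚ) / N) + ((k.1 : ℚ), (k.2 : ℚ)) ∨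
      rowMul ((p.1 : ℚ) / N, (p.2 : ℚ) / N) γ =
      -((p.1 : ℚ) / N, (p.2 : ℚ) / N) + ((k.1 : ℚ), (k.2 : ℚ)) := by
  rcases hγ with hγ | hγ
  · obtain ⟨k, hk⟩ := exists_rowMul_eq_add_of_mem_Gamma hN p hγ
    exact ⟨k, Or.inl hk⟩
  · obtain ⟨k, hk⟩ := exists_rowMul_eq_add_of_mem_Gamma hN p hγ
    refine ⟨-k, Or.inr ?_⟩
    rw [← neg_neg (rowMul _ γ), ← rowMul_neg, hk, neg_add]
    simp

theorem fricke_invariant_pm_Gamma_general (N : ℕ) (hN : 0 < N) (a : ℚ × ℚ)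
    (haN : ∃ p : ℤ × ℤ, a = ((p.1 : ℚ) / N, (p.2 : ℚ) / N))
    (γ : SL(2, ℤ))
    (hγ : γ ∈ CongruenceSubgroup.Gamma N ∨ -γ ∈ CongruenceSubgroup.Gamma N)
    (τ : ℂ) (hτ : τ ∈ UHP) :
    fricke a (msmul γ τ) = fricke a τ := by
  obtain ⟨p, rfl⟩ := haN
  have hτ' : τ.im ≠ 0 := ne_of_gt hτ
  rw [fricke_msmul _ γ hτ']
  obtain ⟨k, hk | hk⟩ := exists_rowMul_eq_add_or_eq_neg_add hN.ne' p hγ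
  · rw [hk, fricke_add_intVec _ k hτ']
  · rw [hk, fricke_add_intVec _ k hτ', fricke_neg _ hτ']

/-- If `a ∈ N⁻¹ℤ² ∖ ℤ²`, then the Fricke function `f_a` is invariant under `{±I}·Γ(N)`:
`f_a(γτ) = f_a(τ)` for all `γ ∈ {±I}Γ(N)` and all `τ ∈ ℍ`. -/
theorem fricke_invariant_pm_Gamma (N : ℕ) (hN : 0 < N) (a : ℚ × ℚ)
    (ha : NotIntVec a) (haN : ∃ p : ℤ × ℤ, a = ((p.1 : ℚ) / N, (p.2 : ℚ) / N))
    (γ : SL(2, ℤ))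
    (hγ : γ ∈ CongruenceSubgroup.Gamma N ∨ -γ ∈ CongruenceSubgroup.Gamma N)
    (τ : ℂ) (hτ : τ ∈ UHP) :
    fricke a (msmul γ τ) = fricke a τ :=
  fricke_invariant_pm_Gamma_general N hN a haN γ hγ τ hτ
end
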